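/- arXiv:1903.06731 — 3 statements merged into one kernel-verified Lean document; each statement's English description precedes it below -/
import Mathlib

section
/- Let N ∈ ℕ, ℓ ∈ [N], x ∈ {0, 1/N, 2/N, …, 1}, and let K ~ Hypergeometric(N, Nx, ℓ) and B ~ Binomial(ℓ, x). Then for all i ∈ {0,…,ℓ}, |P(K = i) − P(B = i)| ≤ C(ℓ, ⌊ℓ/2⌋) · 2ℓ² / (N − ℓ + 1). -/
open Finset

section Helpers

lemma prod_sub_prod_abs_le (f g : ℕ → ℝ) (n : ℕ)
    (hf : ∀ t < n, f t ∈ Set.Icc (0:ℝ) 1) (hg : ∀ t < n, g t ∈ Set.Icc (0:ℝ) 1) :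
    |∏ t ∈ range n, f t - ∏ t ∈ range n, g t| ≤ ∑ t ∈ range n, |f t - g t| := by
  induction n with
  | zero => simp
  | succ n ih =>
    have hf' : ∀ t < n, f t ∈ Set.Icc (0:ℝ) 1 := fun t ht => hf t (ht.trans (Nat.lt_succ_self n))
    have hg' : ∀ t < n, g t ∈ Set.Icc (0:ℝ) 1 := fun t ht => hg t (ht.trans (Nat.lt_succ_self n))
    have hPf : ∏ t ∈ range n, f t ∈ Set.Icc (0:ℝ) 1 := by
      constructor
      · exact Finset.prod_nonneg fun t ht => (hf' t (mem_range.mp ht)).1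
      · exact Finset.prod_le_one (fun t ht => (hf' t (mem_range.mp ht)).1)
          (fun t ht => (hf' t (mem_range.mp ht)).2)
    rw [prod_range_succ, prod_range_succ, sum_range_succ]
    have key : (∏ t ∈ range n, f t) * f n - (∏ t ∈ range n, g t) * g n =
        (∏ t ∈ range n, f t) * (f n - g n) +
        ((∏ t ∈ range n, f t) - ∏ t ∈ range n, g t) * g n := by ring
    rw [key]
    refine (abs_add_le _ _).trans ?_
    have hgn := hg n (Nat.lt_succ_self n)
    have h1 : |(∏ t ∈ range n, f t) * (f n - g n)| ≤ |f n - g n| := by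
      rw [abs_mul]
      have : |∏ t ∈ range n, f t| ≤ 1 := by rw [abs_of_nonneg hPf.1]; exact hPf.2
      nlinarith [abs_nonneg (f n - g n)]
    have h2 : |((∏ t ∈ range n, f t) - ∏ t ∈ range n, g t) * g n| ≤
        ∑ t ∈ range n, |f t - g t| := by
      rw [abs_mul, abs_of_nonneg hgn.1]
      calc |(∏ t ∈ range n, f t) - ∏ t ∈ range n, g t| * g n
          ≤ |(∏ t ∈ range n, f t) - ∏ t ∈ range n, g t| * 1 := by
            apply mul_le_mul_of_nonneg_left hgn.2 (abs_nonneg _)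
        _ = |(∏ t ∈ range n, f t) - ∏ t ∈ range n, g t| := mul_one _
        _ ≤ ∑ t ∈ range n, |f t - g t| := ih hf' hg'
    linarith

lemma key_nat_identity (N ℓ j i : ℕ) (hi : i ≤ ℓ) :
    j.choose i * (N - j).choose (ℓ - i) * N.descFactorial ℓ =
      N.choose ℓ * ℓ.choose i * (j.descFactorial i * (N - j).descFactorial (ℓ - i)) := by
  rw [Nat.descFactorial_eq_factorial_mul_choose, Nat.descFactorial_eq_factorial_mul_choose,
    Nat.descFactorial_eq_factorial_mul_choose, ← Nat.choose_mul_factorial_mul_factorial hi]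
  ring

lemma factor_bound₁ (n l a t : ℝ) (ht0 : 0 ≤ t) (htl : t ≤ l - 1)
    (ha0 : 0 ≤ a) (han : a ≤ n) (hln : l ≤ n) (hl1 : 1 ≤ l) :
    |(a - t)/(n - t) - a/n| ≤ l/(n - l + 1) := by
  have h1 : 0 < n - l + 1 := by linarith
  have h2 : 0 < n - t := by linarith
  have hn0 : 0 < n := by linarith
  have e : (a - t)/(n - t) - a/n = -(t*(n - a))/(n*(n - t)) := by
    field_simp
    ring
  rw [e, abs_div, abs_neg, abs_of_nonneg (by nlinarith), abs_of_pos (by positivity),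
    div_le_div_iff₀ (by positivity) h1]
  nlinarith [mul_le_mul (show t*(n-a) ≤ l*n by nlinarith)
    (show n - l + 1 ≤ n - t by linarith) h1.le (show (0:ℝ) ≤ l*n by nlinarith)]

lemma factor_bound₂ (n l a u t : ℝ) (hu0 : 0 ≤ u) (hut : u ≤ t) (htl : t ≤ l - 1)
    (ha0 : 0 ≤ a) (han : a ≤ n) (hln : l ≤ n) (hl1 : 1 ≤ l) (hul : u ≤ l) :
    |(n - a - (t - u))/(n - t) - (1 - a/n)| ≤ l/(n - l + 1) := by
  have h1 : 0 < n - l + 1 := by linarith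
  have h2 : 0 < n - t := by linarith
  have hn0 : 0 < n := by linarith
  have e : (n - a - (t - u))/(n - t) - (1 - a/n) = (u*n - a*t)/(n*(n - t)) := by
    field_simp
    ring
  have habs : |u*n - a*t| ≤ l*n := by
    rw [abs_le]
    constructor
    · nlinarith
    · nlinarith
  rw [e, abs_div, abs_of_pos (mul_pos hn0 h2), div_le_div_iff₀ (by positivity) h1]
  nlinarith [mul_le_mul habs (show n - l + 1 ≤ n - t by linarith) h1.le
    (show (0:ℝ) ≤ l*n by nlinarith), le_abs_self (u*n - a*t)]

end Helpers

set_option maxHeartbeats 1000000 in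
/-- Uniform bound between the hypergeometric pmf (sample of size `ℓ` from a population
of size `N` with `j` successes, so `x = j/N`) and the binomial pmf with parameters
`ℓ` and `x = j/N`. -/
theorem hypergeometric_binomial_uniform_bound
    (N ℓ : ℕ) (hℓ : 1 ≤ ℓ) (hℓN : ℓ ≤ N) (j : ℕ) (hj : j ≤ N) (i : ℕ) (hi : i ≤ ℓ) :
    |((j.choose i : ℝ) * ((N - j).choose (ℓ - i) : ℝ)) / (N.choose ℓ : ℝ) -
        (ℓ.choose i : ℝ) * ((j : ℝ)/(N : ℝ))^i * (1 - (j : ℝ)/(N : ℝ))^(ℓ - i)| ≤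
      (ℓ.choose (ℓ/2) : ℝ) * (2 * (ℓ : ℝ)^2) / ((N : ℝ) - (ℓ : ℝ) + 1) := by
  have hN : 1 ≤ N := hℓ.trans hℓN
  have hNR : (1:ℝ) ≤ (N:ℝ) := by exact_mod_cast hN
  have hN0 : (0:ℝ) < N := by linarith
  have hℓR : (1:ℝ) ≤ (ℓ:ℝ) := by exact_mod_cast hℓ
  have hℓNR : (ℓ:ℝ) ≤ (N:ℝ) := by exact_mod_cast hℓN
  have hjR : (j:ℝ) ≤ (N:ℝ) := by exact_mod_cast hj
  have hD : (0:ℝ) < (N:ℝ) - ℓ + 1 := by linarith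
  set x : ℝ := (j:ℝ)/(N:ℝ) with hx
  have hx0 : 0 ≤ x := div_nonneg (Nat.cast_nonneg j) hN0.le
  have hx1 : x ≤ 1 := by rw [hx, div_le_one hN0]; exact hjR
  have hmid : (ℓ.choose i : ℝ) ≤ (ℓ.choose (ℓ/2) : ℝ) := by
    exact_mod_cast Nat.choose_le_middle i ℓ
  have hmid0 : (0:ℝ) < (ℓ.choose (ℓ/2) : ℝ) := by
    exact_mod_cast Nat.choose_pos (Nat.div_le_self ℓ 2)
  have hdeg : (ℓ:ℝ)/(N:ℝ) ≤ 2 * (ℓ:ℝ)^2 / ((N:ℝ) - ℓ + 1) := by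
    rw [div_le_div_iff₀ hN0 hD]
    nlinarith [mul_le_mul_of_nonneg_left (show (N:ℝ) - ℓ + 1 ≤ N by linarith)
        (show (0:ℝ) ≤ ℓ by linarith),
      mul_le_mul_of_nonneg_right (show (ℓ:ℝ) ≤ 2 * ℓ^2 by nlinarith) hN0.le]
  have hRHS : (ℓ.choose (ℓ/2) : ℝ) * (2 * (ℓ:ℝ)^2) / ((N:ℝ) - (ℓ:ℝ) + 1) =
      (ℓ.choose (ℓ/2) : ℝ) * (2 * (ℓ:ℝ)^2 / ((N:ℝ) - ℓ + 1)) := by ring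
  by_cases hcase1 : j < i
  · -- degenerate case: the hypergeometric term vanishes since `j < i`
    rw [Nat.choose_eq_zero_of_lt hcase1]
    have h1x0 : (0:ℝ) ≤ 1 - x := by linarith
    have hB0 : 0 ≤ (ℓ.choose i : ℝ) * x^i * (1-x)^(ℓ-i) :=
      mul_nonneg (mul_nonneg (Nat.cast_nonneg _) (pow_nonneg hx0 _)) (pow_nonneg h1x0 _)
    rw [Nat.cast_zero, show ((0:ℝ) * ((N - j).choose (ℓ - i) : ℝ)) / (N.choose ℓ : ℝ) = 0
        by ring, zero_sub, abs_neg, abs_of_nonneg hB0, hRHS]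
    have hxi : x^i ≤ x := pow_le_of_le_one hx0 hx1 (by omega)
    have hxl : x ≤ (ℓ:ℝ)/(N:ℝ) := by
      rw [hx]; gcongr; exact_mod_cast (by omega : j ≤ ℓ)
    have hp1 : (1-x)^(ℓ-i) ≤ 1 := pow_le_one₀ h1x0 (by linarith)
    calc (ℓ.choose i : ℝ) * x^i * (1-x)^(ℓ-i)
        ≤ (ℓ.choose (ℓ/2) : ℝ) * ((ℓ:ℝ)/(N:ℝ)) * 1 :=
          mul_le_mul (mul_le_mul hmid (hxi.trans hxl) (pow_nonneg hx0 _) hmid0.le)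
            hp1 (pow_nonneg h1x0 _) (by positivity)
      _ = (ℓ.choose (ℓ/2) : ℝ) * ((ℓ:ℝ)/(N:ℝ)) := mul_one _
      _ ≤ (ℓ.choose (ℓ/2) : ℝ) * (2 * (ℓ:ℝ)^2 / ((N:ℝ) - ℓ + 1)) := by gcongr
  · have hij : i ≤ j := le_of_not_gt hcase1
    by_cases hcase2 : N - j < ℓ - i
    · -- degenerate case: the hypergeometric term vanishes since `N - j < ℓ - i`
      rw [Nat.choose_eq_zero_of_lt hcase2]
      have h1x0 : (0:ℝ) ≤ 1 - x := by linarith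
      have hB0 : 0 ≤ (ℓ.choose i : ℝ) * x^i * (1-x)^(ℓ-i) :=
        mul_nonneg (mul_nonneg (Nat.cast_nonneg _) (pow_nonneg hx0 _)) (pow_nonneg h1x0 _)
      rw [show ((j.choose i : ℝ) * ((0:ℕ) : ℝ)) / (N.choose ℓ : ℝ) = 0 by
          rw [Nat.cast_zero]; ring, zero_sub, abs_neg, abs_of_nonneg hB0, hRHS]
      have h1xl : 1 - x ≤ (ℓ:ℝ)/(N:ℝ) := by
        have hNjl : ((N - j : ℕ) : ℝ) ≤ (ℓ:ℝ) := by exact_mod_cast (by omega : N - j ≤ ℓ)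
        have : 1 - x = ((N - j : ℕ) : ℝ) / (N:ℝ) := by
          rw [hx, Nat.cast_sub hj]; field_simp
        rw [this]; gcongr
      have hp1 : (1-x)^(ℓ-i) ≤ 1 - x := pow_le_of_le_one h1x0 (by linarith) (by omega)
      have hxi : x^i ≤ 1 := pow_le_one₀ hx0 hx1
      calc (ℓ.choose i : ℝ) * x^i * (1-x)^(ℓ-i)
          ≤ (ℓ.choose (ℓ/2) : ℝ) * 1 * ((ℓ:ℝ)/(N:ℝ)) :=
            mul_le_mul (mul_le_mul hmid hxi (pow_nonneg hx0 _) hmid0.le)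
              (hp1.trans h1xl) (pow_nonneg h1x0 _) (by positivity)
        _ = (ℓ.choose (ℓ/2) : ℝ) * ((ℓ:ℝ)/(N:ℝ)) := by ring
        _ ≤ (ℓ.choose (ℓ/2) : ℝ) * (2 * (ℓ:ℝ)^2 / ((N:ℝ) - ℓ + 1)) := by gcongr
    · -- main case
      have hr : ℓ - i ≤ N - j := le_of_not_gt hcase2
      have hijR : (i:ℝ) ≤ (j:ℝ) := by exact_mod_cast hij
      have hiR : (0:ℝ) ≤ (i:ℝ) := Nat.cast_nonneg i
      have hriR : (ℓ:ℝ) - (i:ℝ) ≤ (N:ℝ) - (j:ℝ) := by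
        rw [← Nat.cast_sub hi, ← Nat.cast_sub hj]; exact_mod_cast hr
      set f : ℕ → ℝ := fun t =>
        (if t < i then (j:ℝ) - t else (N:ℝ) - j - ((t:ℝ) - i)) / ((N:ℝ) - t) with hfdef
      set g : ℕ → ℝ := fun t => if t < i then x else 1 - x with hgdef
      have htlt : ∀ t < ℓ, (t:ℝ) ≤ (ℓ:ℝ) - 1 := by
        intro t ht
        have : ((t:ℕ):ℝ) + 1 ≤ (ℓ:ℝ) := by exact_mod_cast ht
        linarith
      have hdenpos : ∀ t < ℓ, (0:ℝ) < (N:ℝ) - t := by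
        intro t ht; have := htlt t ht; linarith
      -- product formula for g
      have hsplit : range ℓ = range (i + (ℓ - i)) := by congr 1; omega
      have hgprod : ∏ t ∈ range ℓ, g t = x^i * (1-x)^(ℓ-i) := by
        rw [hsplit, prod_range_add]
        congr 1
        · rw [Finset.prod_congr rfl fun t ht => if_pos (mem_range.mp ht)]
          rw [prod_const, card_range]
        · rw [Finset.prod_congr rfl fun t ht => if_neg (by omega : ¬ i + t < i)]
          rw [prod_const, card_range]
      -- product formula for f
      have hnum1 : (j.descFactorial i : ℝ) = ∏ t ∈ range i, ((j:ℝ) - t) := by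
        rw [Nat.descFactorial_eq_prod_range, Nat.cast_prod]
        exact prod_congr rfl fun t ht =>
          Nat.cast_sub ((mem_range.mp ht).le.trans hij)
      have hnum2 : ((N - j).descFactorial (ℓ - i) : ℝ) = ∏ s ∈ range (ℓ - i), ((N:ℝ) - j - s) := by
        rw [Nat.descFactorial_eq_prod_range, Nat.cast_prod]
        refine prod_congr rfl fun s hs => ?_
        have hs' : s ≤ N - j := (mem_range.mp hs).le.trans hr
        rw [Nat.cast_sub hs', Nat.cast_sub hj]
      have hdenp : (N.descFactorial ℓ : ℝ) = ∏ t ∈ range ℓ, ((N:ℝ) - t) := by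
        rw [Nat.descFactorial_eq_prod_range, Nat.cast_prod]
        exact prod_congr rfl fun t ht => Nat.cast_sub ((mem_range.mp ht).le.trans hℓN)
      have hfprod : ∏ t ∈ range ℓ, f t =
          (j.descFactorial i : ℝ) * ((N - j).descFactorial (ℓ - i) : ℝ) /
            (N.descFactorial ℓ : ℝ) := by
        simp only [hfdef]
        rw [Finset.prod_div_distrib, ← hdenp]
        congr 1
        rw [hsplit, prod_range_add]
        rw [Finset.prod_congr rfl fun t ht => if_pos (mem_range.mp ht), ← hnum1]
        congr 1
        rw [hnum2]
        refine prod_congr rfl fun s hs => ?_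
        rw [if_neg (by omega : ¬ i + s < i)]
        push_cast
        ring
      -- hypergeometric pmf as `choose ℓ i * ∏ f`
      have hC0 : (0:ℝ) < (N.choose ℓ : ℝ) := by exact_mod_cast Nat.choose_pos hℓN
      have hdF0 : (0:ℝ) < (N.descFactorial ℓ : ℝ) := by
        have : 0 < N.descFactorial ℓ := by
          rw [Nat.descFactorial_eq_factorial_mul_choose]
          exact Nat.mul_pos (Nat.factorial_pos ℓ) (Nat.choose_pos hℓN)
        exact_mod_cast this
      have hid : (j.choose i : ℝ) * ((N - j).choose (ℓ - i) : ℝ) * (N.descFactorial ℓ : ℝ) =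
          (N.choose ℓ : ℝ) * (ℓ.choose i : ℝ) *
            ((j.descFactorial i : ℝ) * ((N - j).descFactorial (ℓ - i) : ℝ)) := by
        exact_mod_cast congrArg (Nat.cast (R := ℝ)) (key_nat_identity N ℓ j i hi)
      have hH : (j.choose i : ℝ) * ((N - j).choose (ℓ - i) : ℝ) / (N.choose ℓ : ℝ) =
          (ℓ.choose i : ℝ) * ∏ t ∈ range ℓ, f t := by
        rw [hfprod]
        field_simp
        linear_combination hid
      -- membership bounds
      have hfmem : ∀ t < ℓ, f t ∈ Set.Icc (0:ℝ) 1 := by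
        intro t ht
        have hNt := hdenpos t ht
        have htR := htlt t ht
        simp only [hfdef]
        by_cases h : t < i
        · rw [if_pos h]
          have htj : (t:ℝ) ≤ (j:ℝ) := by
            have : (t:ℝ) < (i:ℝ) := by exact_mod_cast h
            linarith
          constructor
          · exact div_nonneg (by linarith) hNt.le
          · rw [div_le_one hNt]; linarith
        · rw [if_neg h]
          have hitR : (i:ℝ) ≤ (t:ℝ) := by exact_mod_cast le_of_not_gt h
          constructor
          · apply div_nonneg _ hNt.le
            linarith
          · rw [div_le_one hNt]; linarith
      have hgmem : ∀ t < ℓ, g t ∈ Set.Icc (0:ℝ) 1 := by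
        intro t _
        simp only [hgdef]
        by_cases h : t < i <;> simp [h] <;> constructor <;> linarith
      -- per-factor difference bound
      have hdiff : ∀ t < ℓ, |f t - g t| ≤ (ℓ:ℝ) / ((N:ℝ) - ℓ + 1) := by
        intro t ht
        have htR := htlt t ht
        have ht0 : (0:ℝ) ≤ (t:ℝ) := Nat.cast_nonneg t
        by_cases h : t < i
        · simp only [hfdef, hgdef, if_pos h, hx]
          exact factor_bound₁ (N:ℝ) (ℓ:ℝ) (j:ℝ) (t:ℝ) ht0 htR (Nat.cast_nonneg j)
            hjR hℓNR hℓR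
        · have hitR : (i:ℝ) ≤ (t:ℝ) := by exact_mod_cast le_of_not_gt h
          have hilR : (i:ℝ) ≤ (ℓ:ℝ) := by exact_mod_cast hi
          simp only [hfdef, hgdef, if_neg h, hx]
          exact factor_bound₂ (N:ℝ) (ℓ:ℝ) (j:ℝ) (i:ℝ) (t:ℝ) hiR hitR htR
            (Nat.cast_nonneg j) hjR hℓNR hℓR hilR
      -- sum bound
      have hsum : ∑ t ∈ range ℓ, |f t - g t| ≤ (ℓ:ℝ) * ((ℓ:ℝ) / ((N:ℝ) - ℓ + 1)) := by
        calc ∑ t ∈ range ℓ, |f t - g t|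
            ≤ ∑ _t ∈ range ℓ, (ℓ:ℝ) / ((N:ℝ) - ℓ + 1) :=
              Finset.sum_le_sum fun t ht => hdiff t (mem_range.mp ht)
          _ = (ℓ:ℝ) * ((ℓ:ℝ) / ((N:ℝ) - ℓ + 1)) := by
              rw [sum_const, card_range, nsmul_eq_mul]
      -- assemble
      have hBeq : (ℓ.choose i : ℝ) * x^i * (1-x)^(ℓ-i) =
          (ℓ.choose i : ℝ) * ∏ t ∈ range ℓ, g t := by rw [hgprod]; ring
      rw [hH, hBeq, ← mul_sub, abs_mul, abs_of_nonneg (Nat.cast_nonneg _), hRHS]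
      have hmain := (prod_sub_prod_abs_le f g ℓ hfmem hgmem).trans hsum
      calc (ℓ.choose i : ℝ) * |(∏ t ∈ range ℓ, f t) - ∏ t ∈ range ℓ, g t|
          ≤ (ℓ.choose (ℓ/2) : ℝ) * ((ℓ:ℝ) * ((ℓ:ℝ) / ((N:ℝ) - ℓ + 1))) := by
            apply mul_le_mul hmid hmain (abs_nonneg _) hmid0.le
        _ ≤ (ℓ.choose (ℓ/2) : ℝ) * (2 * (ℓ:ℝ)^2 / ((N:ℝ) - ℓ + 1)) := by
            apply mul_le_mul_of_nonneg_left _ hmid0.le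
            rw [show (ℓ:ℝ) * ((ℓ:ℝ) / ((N:ℝ) - ℓ + 1)) = (ℓ:ℝ)^2 / ((N:ℝ) - ℓ + 1) by ring]
            gcongr
            nlinarith
end

section
/- Wright–Fisher generator identity in the Bernstein basis: for n ≥ 2, v ∈ ℝ^{n+1} and x ∈ ℝ, (x(1−x)/2) · (d²/dx²) ⟨B_n(x), v⟩ = (n(n−1)/2) · ( ⟨B_{n−1}(x), C^{n,2}v⟩ − ⟨B_n(x), v⟩ ), where ⟨B_m(x), w⟩ := ∑_{i=0}^m w_i b_{i,m}(x). -/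
/-!
With `p = ∑ vᵢ bᵢ,ₙ` one has `p' = n ∑ (Δv)ᵢ bᵢ,ₙ₋₁` and `x(1-x) b'ₖ,ₘ = (k - m x) bₖ,ₘ`, hence
`x(1-x) p'' = n ∑ (i - (n-1)x) (Δv)ᵢ bᵢ,ₙ₋₁`. On the other side, degree elevation gives
`p = ∑ (vᵢ + x (Δv)ᵢ) bᵢ,ₙ₋₁` while `(C^{n,2} v)ᵢ = vᵢ + i/(n-1) (Δv)ᵢ`, so the right-hand side is
the same sum.
-/

/-- The Bernstein basis polynomial. -/
noncomputable def bern (n i : ℕ) (x : ℝ) : ℝ := (n.choose i : ℝ) * x^i * (1-x)^(n-i)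

/-- The pairwise coagulation operator `C^{n,2}` on Bernstein coefficient vectors. -/
noncomputable def coag2 (n : ℕ) (v : ℕ → ℝ) (i : ℕ) : ℝ :=
  (i : ℝ)/((n : ℝ) - 1) * v (i+1) + (1 - (i : ℝ)/((n : ℝ) - 1)) * v i

open Polynomial Finset

theorem sum_range_mul_eq_of_shift_recurrence {R : Type*} [CommRing R] (m : ℕ) (v u g : ℕ → R)
    (a b : R) (hu : u (m + 1) = 0) (hg₀ : g 0 = b * u 0)
    (hg : ∀ i, g (i + 1) = a * u i + b * u (i + 1)) :
    ∑ i ∈ range (m + 2), v i * g i = ∑ i ∈ range (m + 1), (v (i + 1) * a + v i * b) * u i := by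
  have hshift : ∑ i ∈ range (m + 1), v i * b * u i =
      v 0 * b * u 0 + ∑ i ∈ range (m + 1), v (i + 1) * b * u (i + 1) := by
    rw [sum_range_succ' _ m, sum_range_succ _ m, hu, mul_zero, add_zero, add_comm]
  rw [sum_range_succ', hg₀]
  simp only [hg, add_mul, mul_add, sum_add_distrib, hshift, ← mul_assoc]
  abel

namespace bernsteinPolynomial

variable {R : Type*} [CommRing R]

theorem succ_zero (m : ℕ) :
    bernsteinPolynomial R (m + 1) 0 = (1 - X) * bernsteinPolynomial R m 0 := by
  simp [bernsteinPolynomial, pow_succ, mul_comm]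

theorem succ_succ (m k : ℕ) :
    bernsteinPolynomial R (m + 1) (k + 1) =
      X * bernsteinPolynomial R m k + (1 - X) * bernsteinPolynomial R m (k + 1) := by
  rcases lt_or_ge m k with hmk | hkm
  · simp [eq_zero_of_lt R hmk, eq_zero_of_lt R (Nat.succ_lt_succ hmk),
      eq_zero_of_lt R (hmk.trans k.lt_succ_self)]
  obtain ⟨j, rfl⟩ := Nat.exists_eq_add_of_le hkm
  rcases j with _ | j
  · simp [bernsteinPolynomial, pow_succ, mul_comm]
  · simp only [bernsteinPolynomial, Nat.choose_succ_succ', Nat.cast_add]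
    rw [show k + (j + 1) + 1 - (k + 1) = j + 1 by omega, show k + (j + 1) - k = j + 1 by omega,
      show k + (j + 1) - (k + 1) = j by omega]
    ring

theorem X_mul_derivative_X_pow (k : ℕ) :
    X * derivative (X ^ k : R[X]) = (k : R[X]) * X ^ k := by
  rcases k with _ | k
  · simp
  · rw [derivative_X_pow, Nat.add_sub_cancel, pow_succ, C_eq_natCast]
    ring

theorem one_sub_X_mul_derivative_one_sub_X_pow (j : ℕ) :
    (1 - X) * derivative ((1 - X) ^ j : R[X]) = -((j : R[X]) * (1 - X) ^ j) := by
  rcases j with _ | j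
  · simp
  · rw [derivative_pow, Nat.add_sub_cancel, pow_succ, C_eq_natCast, derivative_sub,
      derivative_one, derivative_X]
    ring

theorem X_mul_one_sub_X_mul_derivative (m k : ℕ) :
    X * (1 - X) * derivative (bernsteinPolynomial R m k) =
      ((k : R[X]) - (m : R[X]) * X) * bernsteinPolynomial R m k := by
  rcases lt_or_ge m k with hmk | hkm
  · simp [eq_zero_of_lt R hmk]
  obtain ⟨j, rfl⟩ := Nat.exists_eq_add_of_le hkm
  have hX := X_mul_derivative_X_pow (R := R) k
  have h1X := one_sub_X_mul_derivative_one_sub_X_pow (R := R) j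
  simp only [bernsteinPolynomial, Nat.add_sub_cancel_left, derivative_mul, derivative_natCast,
    zero_mul, zero_add]
  push_cast
  linear_combination ((k + j).choose k : R[X]) * ((1 - X) * (1 - X) ^ j * hX + X * X ^ k * h1X)

end bernsteinPolynomial

/-- The polynomial `⟨Bₙ(X), v⟩`. -/
noncomputable def bernsteinCombination {R : Type*} [CommRing R] (n : ℕ) (v : ℕ → R) : R[X] :=
  ∑ i ∈ range (n + 1), C (v i) * bernsteinPolynomial R n i

namespace bernsteinCombination

variable {R : Type*} [CommRing R]

theorem succ_eq_sum (m : ℕ) (v : ℕ → R) :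
    bernsteinCombination (m + 1) v =
      ∑ i ∈ range (m + 1), (C (v (i + 1)) * X + C (v i) * (1 - X)) * bernsteinPolynomial R m i :=
  sum_range_mul_eq_of_shift_recurrence m _ _ _ X (1 - X)
    (bernsteinPolynomial.eq_zero_of_lt R m.lt_succ_self)
    (bernsteinPolynomial.succ_zero m) (bernsteinPolynomial.succ_succ m)

theorem derivative_succ (m : ℕ) (v : ℕ → R) :
    derivative (bernsteinCombination (m + 1) v) =
      ((m + 1 : ℕ) : R[X]) * bernsteinCombination m (fwdDiff 1 v) := by
  simp only [bernsteinCombination, derivative_sum, derivative_C_mul]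
  rw [sum_range_mul_eq_of_shift_recurrence m _ _ _ ((m + 1 : ℕ) : R[X]) (-(m + 1))
    (bernsteinPolynomial.eq_zero_of_lt R m.lt_succ_self)
    (by rw [bernsteinPolynomial.derivative_zero]; push_cast; rfl)
    (fun i => by rw [bernsteinPolynomial.derivative_succ_aux]; push_cast; ring), mul_sum]
  refine sum_congr rfl fun i _ => ?_
  simp only [fwdDiff, C_sub]
  push_cast
  ring

theorem X_mul_one_sub_X_mul_derivative (m : ℕ) (w : ℕ → R) :
    X * (1 - X) * derivative (bernsteinCombination m w) =
      ∑ i ∈ range (m + 1), C (w i) * ((i : R[X]) - (m : R[X]) * X) * bernsteinPolynomial R m i := by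
  simp only [bernsteinCombination, derivative_sum, derivative_C_mul, mul_sum]
  refine sum_congr rfl fun i _ => ?_
  rw [mul_assoc (C _), ← bernsteinPolynomial.X_mul_one_sub_X_mul_derivative]
  ring

end bernsteinCombination

theorem deriv_deriv_polynomial_eval {𝕜 : Type*} [NontriviallyNormedField 𝕜] (p : 𝕜[X]) (x : 𝕜) :
    deriv (deriv fun y => p.eval y) x = (derivative (derivative p)).eval x := by
  have h : (deriv fun y => p.eval y) = fun y => p.derivative.eval y := funext fun _ => p.deriv
  rw [h, Polynomial.deriv]

theorem bern_eq_eval (n i : ℕ) (x : ℝ) : bern n i x = (bernsteinPolynomial ℝ n i).eval x := by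
  simp [bern, bernsteinPolynomial]

theorem eval_bernsteinCombination (n : ℕ) (v : ℕ → ℝ) (x : ℝ) :
    (bernsteinCombination n v).eval x = ∑ i ∈ range (n + 1), v i * bern n i x := by
  simp [bernsteinCombination, eval_finsetSum, bern_eq_eval]

/-- Wright–Fisher generator identity in the Bernstein basis. -/
theorem wright_fisher_generator_bernstein (n : ℕ) (hn : 2 ≤ n) (v : ℕ → ℝ) (x : ℝ) :
    x * (1 - x) / 2 *
        deriv (deriv (fun y => ∑ i ∈ Finset.range (n+1), v i * bern n i y)) x =
      (n : ℝ) * ((n : ℝ) - 1) / 2 *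
        ((∑ i ∈ Finset.range n, coag2 n v i * bern (n-1) i x) -
          ∑ i ∈ Finset.range (n+1), v i * bern n i x) := by
  obtain ⟨m, rfl⟩ : ∃ m, n = m + 1 + 1 := ⟨n - 2, by omega⟩
  have hp : (fun y => ∑ i ∈ range (m + 1 + 1 + 1), v i * bern (m + 1 + 1) i y) =
      fun y => (bernsteinCombination (m + 1 + 1) v).eval y :=
    funext fun y => (eval_bernsteinCombination _ v y).symm
  have hgen := congrArg (eval x)
    (bernsteinCombination.X_mul_one_sub_X_mul_derivative (m + 1) (fwdDiff 1 v))
  have helev := congrArg (eval x) (bernsteinCombination.succ_eq_sum (m + 1) v)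
  simp only [eval_mul, eval_add, eval_sub, eval_finsetSum, eval_C, eval_X, eval_one, eval_natCast,
    ← bern_eq_eval] at hgen helev
  rw [hp, deriv_deriv_polynomial_eval, bernsteinCombination.derivative_succ,
    derivative_natCast_mul, eval_mul, eval_natCast, ← eval_bernsteinCombination, helev,
    show ∀ a b : ℝ, x * (1 - x) / 2 * (a * b) = a / 2 * (x * (1 - x) * b) by intros; ring, hgen,
    Nat.add_sub_cancel, ← sum_sub_distrib, mul_sum, mul_sum]
  refine sum_congr rfl fun i _ => ?_
  simp only [coag2, fwdDiff]
  push_cast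
  field_simp
  ring
end

section
/- Coalescence (Λ-part) identity: for n ≥ 1, v ∈ ℝ^{n+1}, x ∈ [0,1] and r ∈ [0,1]: x·⟨B_n(r + (1−r)x), v⟩ + (1−x)·⟨B_n((1−r)x), v⟩ = (1−r)^n ⟨B_n(x), v⟩ + n r (1−r)^{n−1} ⟨B_n(x), v⟩ + ∑_{k=2}^{n} C(n,k) r^k (1−r)^{n−k} ⟨B_{n−k+1}(x), C^{n,k}v⟩. -/
/-- The coagulation operator `C^{n,k}`. -/
noncomputable def coag (n k : ℕ) (v : ℕ → ℝ) (i : ℕ) : ℝ :=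
  (i : ℝ)/((n - k + 1 : ℕ) : ℝ) * v (i + k - 1) + (1 - (i : ℝ)/((n - k + 1 : ℕ) : ℝ)) * v i

open Finset

theorem Nat.choose_mul_choose_sub_comm (n i k : ℕ) :
    n.choose i * (n - i).choose k = n.choose k * (n - k).choose i := by
  by_cases h : i + k ≤ n
  · have hi := Nat.choose_mul (n := n) (Nat.le_add_right i k)
    have hk := Nat.choose_mul (n := n) (Nat.le_add_left k i)
    rw [Nat.add_sub_cancel_left, Nat.choose_symm_add] at hi
    rw [Nat.add_sub_cancel] at hk
    rw [← hi, hk]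
  · have hzero : ∀ a b, n < a + b → n.choose a * (n - a).choose b = 0 := fun a b hab => by
      simp only [mul_eq_zero, Nat.choose_eq_zero_iff]; omega
    rw [hzero i k (by omega), hzero k i (by omega)]

lemma bern_add_one_sub_mul {n i : ℕ} (hi : i ≤ n) (r x : ℝ) :
    bern n i (r + (1 - r) * x) = ∑ k ∈ range (i + 1), bern n k r * bern (n - k) (i - k) x := by
  rw [bern, show 1 - (r + (1 - r) * x) = (1 - r) * (1 - x) by ring, add_pow, mul_sum, sum_mul]
  refine sum_congr rfl fun k hk => ?_
  have hki : k ≤ i := Nat.lt_succ_iff.mp (mem_range.mp hk)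
  have hchoose : (n.choose i * i.choose k : ℝ) = n.choose k * (n - k).choose (i - k) := by
    exact_mod_cast Nat.choose_mul hki
  have hpow : (1 - r) ^ (n - k) = (1 - r) ^ (i - k) * (1 - r) ^ (n - i) := by
    rw [← pow_add]; congr 1; omega
  rw [bern, bern, hpow, show n - k - (i - k) = n - i by omega]
  simp only [mul_pow]
  linear_combination
    (r ^ k * (1 - r) ^ (i - k) * x ^ (i - k) * (1 - r) ^ (n - i) * (1 - x) ^ (n - i)) * hchoose

lemma bern_one_sub_mul {n i : ℕ} (hi : i ≤ n) (r x : ℝ) :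
    bern n i ((1 - r) * x) = ∑ k ∈ range (n - i + 1), bern n k r * bern (n - k) i x := by
  rw [bern, show 1 - (1 - r) * x = r + (1 - r) * (1 - x) by ring, add_pow, mul_sum]
  refine sum_congr rfl fun k hk => ?_
  have hki : k ≤ n - i := Nat.lt_succ_iff.mp (mem_range.mp hk)
  have hchoose : (n.choose i * (n - i).choose k : ℝ) = n.choose k * (n - k).choose i := by
    exact_mod_cast Nat.choose_mul_choose_sub_comm n i k
  have hpow : (1 - r) ^ (n - k) = (1 - r) ^ i * (1 - r) ^ (n - i - k) := by
    rw [← pow_add]; congr 1; omega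
  rw [bern, bern, hpow, show n - k - i = n - i - k by omega]
  simp only [mul_pow]
  linear_combination
    (r ^ k * (1 - r) ^ i * x ^ i * (1 - r) ^ (n - i - k) * (1 - x) ^ (n - i - k)) * hchoose

lemma sum_bern_add_one_sub_mul (n : ℕ) (v : ℕ → ℝ) (r x : ℝ) :
    ∑ i ∈ range (n + 1), v i * bern n i (r + (1 - r) * x) =
      ∑ k ∈ range (n + 1), bern n k r * ∑ j ∈ range (n - k + 1), v (k + j) * bern (n - k) j x := by
  calc _ = ∑ i ∈ range (n + 1), ∑ k ∈ range (i + 1),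
          bern n k r * (v (k + (i - k)) * bern (n - k) (i - k) x) := by
        refine sum_congr rfl fun i hi => ?_
        rw [bern_add_one_sub_mul (Nat.lt_succ_iff.mp (mem_range.mp hi)), mul_sum]
        refine sum_congr rfl fun k hk => ?_
        rw [Nat.add_sub_cancel' (Nat.lt_succ_iff.mp (mem_range.mp hk))]
        ring
    _ = _ := (sum_range_diag_flip (n + 1) fun k j =>
          bern n k r * (v (k + j) * bern (n - k) j x)).trans <| sum_congr rfl fun k hk => by
          rw [mul_sum, show n + 1 - k = n - k + 1 by have := mem_range.mp hk; omega]

lemma sum_bern_one_sub_mul (n : ℕ) (v : ℕ → ℝ) (r x : ℝ) :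
    ∑ i ∈ range (n + 1), v i * bern n i ((1 - r) * x) =
      ∑ k ∈ range (n + 1), bern n k r * ∑ j ∈ range (n - k + 1), v j * bern (n - k) j x := by
  calc _ = ∑ i ∈ range (n + 1), ∑ k ∈ range (n - i + 1), bern n k r * (v i * bern (n - k) i x) := by
        refine sum_congr rfl fun i hi => ?_
        rw [bern_one_sub_mul (Nat.lt_succ_iff.mp (mem_range.mp hi)), mul_sum]
        exact sum_congr rfl fun k _ => by ring
    _ = _ := by
        simp only [mul_sum]
        exact sum_comm' fun i k => by simp only [mem_range]; omega

lemma mul_bern_eq (m j : ℕ) (x : ℝ) :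
    ((m + 1 : ℕ) : ℝ) * (x * bern m j x) = (j + 1) * bern (m + 1) (j + 1) x := by
  have hchoose : ((m + 1 : ℕ) : ℝ) * m.choose j = (m + 1).choose (j + 1) * (j + 1) := by
    exact_mod_cast Nat.add_one_mul_choose_eq m j
  rw [bern, bern, Nat.add_sub_add_right]
  linear_combination (x ^ (j + 1) * (1 - x) ^ (m - j)) * hchoose

lemma one_sub_mul_bern_eq {m j : ℕ} (hj : j ≤ m) (x : ℝ) :
    ((m + 1 : ℕ) : ℝ) * ((1 - x) * bern m j x) = (((m + 1 : ℕ) : ℝ) - j) * bern (m + 1) j x := by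
  have hchoose :
      (m.choose j : ℝ) * ((m + 1 : ℕ) : ℝ) = (m + 1).choose j * (((m + 1 : ℕ) : ℝ) - j) := by
    rw [← Nat.cast_sub (by omega)]
    exact_mod_cast Nat.choose_mul_succ_eq m j
  rw [bern, bern, show m + 1 - j = m - j + 1 by omega, pow_succ]
  linear_combination (x ^ j * (1 - x) ^ (m - j) * (1 - x)) * hchoose

-- Weights enter as `w (j + 1)` so that no truncated `i - 1` appears.
lemma mul_sum_bern_eq (m : ℕ) (w : ℕ → ℝ) (x : ℝ) :
    x * ∑ j ∈ range (m + 1), w (j + 1) * bern m j x =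
      ∑ i ∈ range (m + 2), (i : ℝ) / ((m + 1 : ℕ) : ℝ) * w i * bern (m + 1) i x := by
  rw [sum_range_succ' _ (m + 1), Nat.cast_zero, zero_div, zero_mul, zero_mul, add_zero, mul_sum]
  refine sum_congr rfl fun j _ => ?_
  have h := mul_bern_eq m j x
  field_simp
  push_cast at h ⊢
  linear_combination w (j + 1) * h

lemma one_sub_mul_sum_bern_eq (m : ℕ) (u : ℕ → ℝ) (x : ℝ) :
    (1 - x) * ∑ j ∈ range (m + 1), u j * bern m j x =
      ∑ i ∈ range (m + 2), (1 - (i : ℝ) / ((m + 1 : ℕ) : ℝ)) * u i * bern (m + 1) i x := by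
  have hm : ((m + 1 : ℕ) : ℝ) ≠ 0 := by positivity
  rw [sum_range_succ _ (m + 1), div_self hm, sub_self, zero_mul, zero_mul, add_zero, mul_sum]
  refine sum_congr rfl fun j hj => ?_
  have h := one_sub_mul_bern_eq (Nat.lt_succ_iff.mp (mem_range.mp hj)) x
  field_simp
  linear_combination u j * h

lemma sum_coag_mul_bern (n k : ℕ) (v : ℕ → ℝ) (x : ℝ) :
    ∑ i ∈ range (n - k + 2), coag n k v i * bern (n - k + 1) i x =
      x * ∑ j ∈ range (n - k + 1), v (k + j) * bern (n - k) j x +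
        (1 - x) * ∑ j ∈ range (n - k + 1), v j * bern (n - k) j x := by
  have hshift : ∑ j ∈ range (n - k + 1), v (k + j) * bern (n - k) j x =
      ∑ j ∈ range (n - k + 1), v (j + 1 + k - 1) * bern (n - k) j x :=
    sum_congr rfl fun j _ => by rw [show j + 1 + k - 1 = k + j by omega]
  rw [hshift, mul_sum_bern_eq (n - k) (fun i => v (i + k - 1)), one_sub_mul_sum_bern_eq,
    ← sum_add_distrib]
  exact sum_congr rfl fun i _ => by rw [coag]; ring

lemma coag_one (n : ℕ) (v : ℕ → ℝ) : coag n 1 v = v := by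
  funext i
  rw [coag, Nat.add_sub_cancel]
  ring

theorem coalescence_generator_bernstein_general (n : ℕ) (hn : 1 ≤ n) (v : ℕ → ℝ)
    (x r : ℝ) :
    x * (∑ i ∈ Finset.range (n+1), v i * bern n i (r + (1-r)*x)) +
        (1-x) * (∑ i ∈ Finset.range (n+1), v i * bern n i ((1-r)*x)) =
      (1-r)^n * (∑ i ∈ Finset.range (n+1), v i * bern n i x) +
        (n : ℝ) * r * (1-r)^(n-1) * (∑ i ∈ Finset.range (n+1), v i * bern n i x) +
        ∑ k ∈ Finset.Icc 2 n, (n.choose k : ℝ) * r^k * (1-r)^(n-k) *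
          (∑ i ∈ Finset.range (n-k+2), coag n k v i * bern (n-k+1) i x) := by
  let E (k : ℕ) : ℝ := x * ∑ j ∈ range (n - k + 1), v (k + j) * bern (n - k) j x +
    (1 - x) * ∑ j ∈ range (n - k + 1), v j * bern (n - k) j x
  have hE0 : E 0 = ∑ i ∈ range (n + 1), v i * bern n i x := by
    simp only [E, Nat.sub_zero, zero_add]
    ring
  have hE1 : E 1 = ∑ i ∈ range (n + 1), v i * bern n i x := by
    rw [show E 1 = _ from (sum_coag_mul_bern n 1 v x).symm, coag_one,
      show n - 1 + 2 = n + 1 by omega, Nat.sub_add_cancel hn]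
  calc _ = ∑ k ∈ range (n + 1), bern n k r * E k := by
        rw [sum_bern_add_one_sub_mul, sum_bern_one_sub_mul, mul_sum, mul_sum, ← sum_add_distrib]
        exact sum_congr rfl fun k _ => by ring
    _ = bern n 0 r * E 0 + bern n 1 r * E 1 + ∑ k ∈ Icc 2 n, bern n k r * E k := by
        rw [range_eq_Ico, sum_eq_sum_Ico_succ_bot (by omega), sum_eq_sum_Ico_succ_bot (by omega),
          Ico_add_one_right_eq_Icc, ← add_assoc]
    _ = _ := by
        rw [hE0, hE1]
        congr 1
        · have hb0 : bern n 0 r = (1 - r) ^ n := by simp [bern]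
          have hb1 : bern n 1 r = n * r * (1 - r) ^ (n - 1) := by simp [bern]
          rw [hb0, hb1]
        · exact sum_congr rfl fun k _ => by rw [sum_coag_mul_bern]; rfl

/-- Coalescence (`Λ`-part) identity in the Bernstein basis. -/
theorem coalescence_generator_bernstein (n : ℕ) (hn : 1 ≤ n) (v : ℕ → ℝ)
    (x r : ℝ) (hx : x ∈ Set.Icc (0:ℝ) 1) (hr : r ∈ Set.Icc (0:ℝ) 1) :
    x * (∑ i ∈ Finset.range (n+1), v i * bern n i (r + (1-r)*x)) +
        (1-x) * (∑ i ∈ Finset.range (n+1), v i * bern n i ((1-r)*x)) =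
      (1-r)^n * (∑ i ∈ Finset.range (n+1), v i * bern n i x) +
        (n : ℝ) * r * (1-r)^(n-1) * (∑ i ∈ Finset.range (n+1), v i * bern n i x) +
        ∑ k ∈ Finset.Icc 2 n, (n.choose k : ℝ) * r^k * (1-r)^(n-k) *
          (∑ i ∈ Finset.range (n-k+2), coag n k v i * bern (n-k+1) i x) :=
  coalescence_generator_bernstein_general n hn v x r
end
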